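/- arXiv:2201.09507 — 2 statements merged into one kernel-verified Lean document; each statement's English description precedes it below -/
import Mathlib

section
/- Assume h^H b ≠ 0, h and b are linearly independent (so b_⊥ ≠ 0), and P_t·|h^H b|²/‖b‖² ≤ σ²γ̄ ≤ P_t·‖h‖². Define w̄ = √(σ²γ̄/‖h‖²)·h̄·(β/|β|) + √(P_t − σ²γ̄/‖h‖²)·b̄_⊥. Then ‖w̄‖² = P_t, |h^H w̄|² = σ²γ̄, and |b^H w̄|² = ( |β|·√(σ²γ̄)/‖h‖ + ‖b_⊥‖·√(P_t − σ²γ̄/‖h‖²) )². In particular, the pair (w̄ w̄^H, 0) is feasible for problem (22). (Theorem 1, second case: feasibility and objective value of the closed-form beamformer in Eq. (23).) -/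
/-!
`h̄` and `b̄⊥` are an orthonormal pair (Gram–Schmidt applied to `h, b`; `b⊥ ≠ 0` by linear
independence), and `h`, `b`, `w̄` have coordinates `(‖h‖, 0)`, `(β, ‖b⊥‖)` and
`(√(σ²γ̄/‖h‖²) · β/|β|, √(P_t − σ²γ̄/‖h‖²))` in it. Every claimed quantity is then a sesquilinear
expression in these coordinates; the phase `β/|β|` has modulus one and turns `β̄ · β/|β|` into `|β|`.
Feasibility holds because `w̄ w̄ᴴ` is positive semidefinite of rank at most one, with trace `‖w̄‖²`
and `hᴴ (w̄ w̄ᴴ) h = |hᴴ w̄|²`.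
-/

open Matrix Finset ComplexOrder

/-- The (real-valued) quadratic form `vᴴ R v` for a complex matrix `R`. -/
noncomputable def quadForm {M : ℕ} (R : Matrix (Fin M) (Fin M) ℂ) (v : Fin M → ℂ) : ℝ :=
  (star v ⬝ᵥ (R *ᵥ v)).re

noncomputable def normSqV {M : ℕ} (v : Fin M → ℂ) : ℝ :=
  ∑ i, Complex.normSq (v i)

noncomputable def normV {M : ℕ} (v : Fin M → ℂ) : ℝ :=
  Real.sqrt (normSqV v)

/-- Feasibility for problem (22): `R₁, R'` Hermitian PSD, `hᴴ R₁ h ≥ σ²γ̄`,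
`tr(R₁ + R') ≤ P_t`, `rank R₁ ≤ 1` and `rank R' ≤ M - 1`. -/
def Feasible22 {M : ℕ} (Pt σ γ : ℝ) (h : Fin M → ℂ)
    (R₁ R' : Matrix (Fin M) (Fin M) ℂ) : Prop :=
  R₁.PosSemidef ∧ R'.PosSemidef ∧ σ ^ 2 * γ ≤ quadForm R₁ h ∧ ((R₁ + R').trace).re ≤ Pt ∧
    R₁.rank ≤ 1 ∧ R'.rank ≤ M - 1

section StarDotProduct

variable {n R : Type*} [Fintype n] [CommRing R] [StarRing R]

lemma star_dotProduct_sub_smul_self_eq_zero {u : n → R} (hu : star u ⬝ᵥ u = 1) (v : n → R) :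
    star u ⬝ᵥ (v - (star u ⬝ᵥ v) • u) = 0 := by
  rw [dotProduct_sub, dotProduct_smul, hu, smul_eq_mul, mul_one, sub_self]

lemma star_dotProduct_add_smul_of_orthonormal {u v : n → R} (hu : star u ⬝ᵥ u = 1)
    (hv : star v ⬝ᵥ v = 1) (huv : star u ⬝ᵥ v = 0) (a b c d : R) :
    star (a • u + b • v) ⬝ᵥ (c • u + d • v) = star a * c + star b * d := by
  have hvu : star v ⬝ᵥ u = 0 := by rw [star_dotProduct, huv, star_zero]
  simp only [star_add, star_smul, add_dotProduct, dotProduct_add, smul_dotProduct,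
    dotProduct_smul, hu, hv, huv, hvu, smul_eq_mul]
  ring

lemma star_smul_dotProduct_add_smul_of_orthonormal {u v : n → R} (hu : star u ⬝ᵥ u = 1)
    (huv : star u ⬝ᵥ v = 0) (a c d : R) :
    star (a • u) ⬝ᵥ (c • u + d • v) = star a * c := by
  rw [star_smul, smul_dotProduct, dotProduct_add, dotProduct_smul, dotProduct_smul, hu, huv,
    smul_eq_mul, smul_eq_mul, smul_eq_mul, mul_one, mul_zero, add_zero]

end StarDotProduct

lemma Complex.star_mul_div_norm (z : ℂ) : star z * (z / ‖z‖) = ‖z‖ := by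
  rcases eq_or_ne z 0 with rfl | hz
  · simp
  rw [← mul_div_assoc, Complex.star_def, Complex.conj_mul', sq, mul_div_assoc,
    div_self (by exact_mod_cast norm_ne_zero_iff.mpr hz), mul_one]

lemma Complex.normSq_div_norm {z : ℂ} (hz : z ≠ 0) : Complex.normSq (z / ‖z‖) = 1 := by
  simp [Complex.normSq_eq_norm_sq, hz]

section

variable {M : ℕ}

lemma star_dotProduct_self_eq_normSqV (v : Fin M → ℂ) : star v ⬝ᵥ v = (normSqV v : ℂ) := by
  simp only [dotProduct, normSqV, Complex.ofReal_sum, Pi.star_apply, Complex.star_def,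
    Complex.normSq_eq_conj_mul_self]

lemma normSqV_pos {v : Fin M → ℂ} (hv : v ≠ 0) : 0 < normSqV v := by
  have := dotProduct_star_self_pos_iff.mpr hv
  rw [star_dotProduct_self_eq_normSqV] at this
  exact_mod_cast this

lemma normV_sq (v : Fin M → ℂ) : normV v ^ 2 = normSqV v :=
  Real.sq_sqrt (Finset.sum_nonneg fun i _ => Complex.normSq_nonneg (v i))

lemma normV_pos {v : Fin M → ℂ} (hv : v ≠ 0) : 0 < normV v :=
  Real.sqrt_pos.mpr (normSqV_pos hv)

lemma star_dotProduct_inv_normV_smul_self {v : Fin M → ℂ} (hv : v ≠ 0) :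
    star ((normV v : ℂ)⁻¹ • v) ⬝ᵥ ((normV v : ℂ)⁻¹ • v) = 1 := by
  have hn : (normV v : ℂ) ≠ 0 := Complex.ofReal_ne_zero.mpr (normV_pos hv).ne'
  rw [star_smul, smul_dotProduct, dotProduct_smul, star_dotProduct_self_eq_normSqV, ← normV_sq]
  simp only [star_inv₀, Complex.star_def, Complex.conj_ofReal, smul_eq_mul, Complex.ofReal_pow]
  field_simp

lemma normSqV_add_smul_of_orthonormal {u v : Fin M → ℂ} (hu : star u ⬝ᵥ u = 1)
    (hv : star v ⬝ᵥ v = 1) (huv : star u ⬝ᵥ v = 0) (x y : ℂ) :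
    normSqV (x • u + y • v) = Complex.normSq x + Complex.normSq y := by
  apply Complex.ofReal_injective
  rw [← star_dotProduct_self_eq_normSqV, star_dotProduct_add_smul_of_orthonormal hu hv huv,
    Complex.star_def, Complex.ofReal_add, Complex.normSq_eq_conj_mul_self,
    Complex.normSq_eq_conj_mul_self]

lemma gramSchmidt_pair_spec {h b hbar bperp bperpbar : Fin M → ℂ} {β : ℂ}
    (hindep : LinearIndependent ℂ ![h, b]) (hhbar : hbar = (normV h : ℂ)⁻¹ • h)
    (hβ : β = star hbar ⬝ᵥ b) (hbperp : bperp = b - β • hbar)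
    (hbperpbar : bperpbar = (normV bperp : ℂ)⁻¹ • bperp) :
    star hbar ⬝ᵥ hbar = 1 ∧ star bperpbar ⬝ᵥ bperpbar = 1 ∧ star hbar ⬝ᵥ bperpbar = 0 ∧
      h = (normV h : ℂ) • hbar ∧ b = β • hbar + (normV bperp : ℂ) • bperpbar := by
  have hh : h ≠ 0 := hindep.ne_zero 0
  have hu := star_dotProduct_inv_normV_smul_self hh
  have hbperp0 : bperp ≠ 0 := by
    rw [hbperp, hhbar, smul_smul, sub_ne_zero]
    exact ((LinearIndependent.pair_iff' hh).mp hindep _).symm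
  refine ⟨hhbar ▸ hu,
    hbperpbar ▸ star_dotProduct_inv_normV_smul_self hbperp0, ?_, ?_, ?_⟩
  · rw [hbperpbar, dotProduct_smul, hbperp, hβ,
      star_dotProduct_sub_smul_self_eq_zero (hhbar ▸ hu), smul_zero]
  · rw [hhbar, smul_smul, mul_inv_cancel₀ (Complex.ofReal_ne_zero.mpr (normV_pos hh).ne'),
      one_smul]
  · rw [hbperpbar, smul_smul,
      mul_inv_cancel₀ (Complex.ofReal_ne_zero.mpr (normV_pos hbperp0).ne'), one_smul, hbperp,
      add_sub_cancel]

lemma quadForm_vecMulVec_star (w h : Fin M → ℂ) :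
    quadForm (vecMulVec w (star w)) h = Complex.normSq (star h ⬝ᵥ w) := by
  rw [quadForm, vecMulVec_mulVec, dotProduct_smul, op_smul_eq_mul, star_dotProduct w h,
    Complex.star_def, Complex.mul_conj, Complex.ofReal_re]

lemma trace_vecMulVec_star (w : Fin M → ℂ) :
    (vecMulVec w (star w)).trace = (normSqV w : ℂ) := by
  rw [trace_vecMulVec, dotProduct_comm, star_dotProduct_self_eq_normSqV]

lemma feasible22_vecMulVec_star_zero {Pt σ γ : ℝ} {h w : Fin M → ℂ} (hPt : normSqV w ≤ Pt)
    (hγ : σ ^ 2 * γ ≤ Complex.normSq (star h ⬝ᵥ w)) :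
    Feasible22 Pt σ γ h (vecMulVec w (star w)) 0 := by
  refine ⟨posSemidef_vecMulVec_self_star w, PosSemidef.zero, ?_, ?_, rank_vecMulVec_le _ _, ?_⟩
  · rwa [quadForm_vecMulVec_star]
  · rwa [add_zero, trace_vecMulVec_star, Complex.ofReal_re]
  · rw [rank_zero]
    exact Nat.zero_le _

end

theorem stmt_2_general {M : ℕ} (h b : Fin M → ℂ)
    (Pt σ γ : ℝ) (hγ : 0 ≤ γ)
    (hbar : Fin M → ℂ) (hhbar : hbar = (normV h : ℂ)⁻¹ • h)
    (β : ℂ) (hβ : β = star hbar ⬝ᵥ b)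
    (bperp : Fin M → ℂ) (hbperp : bperp = b - β • hbar)
    (bperpbar : Fin M → ℂ) (hbperpbar : bperpbar = (normV bperp : ℂ)⁻¹ • bperp)
    (hβne : star h ⬝ᵥ b ≠ 0)
    (hindep : LinearIndependent ℂ ![h, b])
    (hhigh : σ ^ 2 * γ ≤ Pt * normSqV h)
    (w : Fin M → ℂ)
    (hw : w = ((Real.sqrt (σ ^ 2 * γ / normSqV h) : ℝ) : ℂ) • ((β / (‖β‖ : ℂ)) • hbar)
            + ((Real.sqrt (Pt - σ ^ 2 * γ / normSqV h) : ℝ) : ℂ) • bperpbar) :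
    normSqV w = Pt ∧
    Complex.normSq (star h ⬝ᵥ w) = σ ^ 2 * γ ∧
    Complex.normSq (star b ⬝ᵥ w) =
      (‖β‖ * Real.sqrt (σ ^ 2 * γ) / normV h
        + normV bperp * Real.sqrt (Pt - σ ^ 2 * γ / normSqV h)) ^ 2 ∧
    Feasible22 Pt σ γ h (vecMulVec w (star w)) 0 := by
  obtain ⟨hu, hv, huv, hh_eq, hb_eq⟩ := gramSchmidt_pair_spec hindep hhbar hβ hbperp hbperpbar
  have hN : 0 < normSqV h := normSqV_pos (hindep.ne_zero 0)
  set s := Real.sqrt (σ ^ 2 * γ / normSqV h)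
  set t := Real.sqrt (Pt - σ ^ 2 * γ / normSqV h)
  have hs : s ^ 2 = σ ^ 2 * γ / normSqV h := Real.sq_sqrt (by positivity)
  have ht : t ^ 2 = Pt - σ ^ 2 * γ / normSqV h :=
    Real.sq_sqrt (sub_nonneg.mpr ((div_le_iff₀ hN).mpr hhigh))
  have hw_eq : w = ((s : ℂ) * (β / ‖β‖)) • hbar + (t : ℂ) • bperpbar := by rw [hw, smul_smul]
  have hdot_h : star h ⬝ᵥ w = normV h * (s * (β / ‖β‖)) := by
    conv_lhs => rw [hw_eq, hh_eq]
    rw [star_smul_dotProduct_add_smul_of_orthonormal hu huv, Complex.star_def,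
      Complex.conj_ofReal]
  have hβ0 : β ≠ 0 := by
    rintro rfl
    apply hβne
    rw [hh_eq, hb_eq, star_smul_dotProduct_add_smul_of_orthonormal hu huv, mul_zero]
  have hw_norm : normSqV w = Pt := by
    rw [hw_eq, normSqV_add_smul_of_orthonormal hu hv huv, Complex.normSq_mul,
      Complex.normSq_div_norm hβ0, Complex.normSq_ofReal, Complex.normSq_ofReal]
    linear_combination hs + ht
  have hh_gain : Complex.normSq (star h ⬝ᵥ w) = σ ^ 2 * γ := by
    rw [hdot_h, Complex.normSq_mul, Complex.normSq_mul, Complex.normSq_div_norm hβ0,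
      Complex.normSq_ofReal, Complex.normSq_ofReal, ← sq, ← sq, normV_sq, hs]
    field_simp [hN.ne']
  refine ⟨hw_norm, hh_gain, ?_, feasible22_vecMulVec_star_zero hw_norm.le hh_gain.ge⟩
  have hdot_b : star b ⬝ᵥ w = ((‖β‖ * s + normV bperp * t : ℝ) : ℂ) := by
    have := star_dotProduct_add_smul_of_orthonormal hu hv huv β (normV bperp) (s * (β / ‖β‖)) t
    rw [← hb_eq, ← hw_eq, mul_left_comm, Complex.star_mul_div_norm] at this
    simpa [mul_comm] using this
  have hs' : s = Real.sqrt (σ ^ 2 * γ) / normV h := Real.sqrt_div' _ hN.le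
  rw [hdot_b, Complex.normSq_ofReal, hs']
  ring

/-- Theorem 1, second case (feasibility and objective value): with
`h̄ = h/‖h‖`, `β = h̄ᴴ b`, `b⊥ = b − β h̄`, `b̄⊥ = b⊥/‖b⊥‖`, assuming `hᴴ b ≠ 0`,
`h, b` linearly independent and `P_t |hᴴb|²/‖b‖² ≤ σ²γ̄ ≤ P_t ‖h‖²`, the beamformer
`w̄ = √(σ²γ̄/‖h‖²)·h̄·(β/|β|) + √(P_t − σ²γ̄/‖h‖²)·b̄⊥` satisfies `‖w̄‖² = P_t`,
`|hᴴw̄|² = σ²γ̄`, `|bᴴw̄|² = (|β|√(σ²γ̄)/‖h‖ + ‖b⊥‖√(P_t − σ²γ̄/‖h‖²))²`, and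
`(w̄ w̄ᴴ, 0)` is feasible for problem (22). -/
theorem stmt_2 {M : ℕ} (hM : 1 ≤ M) (h b : Fin M → ℂ) (hh : h ≠ 0) (hb : b ≠ 0)
    (Pt σ γ : ℝ) (hPt : 0 < Pt) (hσ : 0 < σ) (hγ : 0 ≤ γ)
    (hbar : Fin M → ℂ) (hhbar : hbar = (normV h : ℂ)⁻¹ • h)
    (β : ℂ) (hβ : β = star hbar ⬝ᵥ b)
    (bperp : Fin M → ℂ) (hbperp : bperp = b - β • hbar)
    (bperpbar : Fin M → ℂ) (hbperpbar : bperpbar = (normV bperp : ℂ)⁻¹ • bperp)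
    (hβne : star h ⬝ᵥ b ≠ 0)
    (hindep : LinearIndependent ℂ ![h, b])
    (hlow : Pt * Complex.normSq (star h ⬝ᵥ b) / normSqV b ≤ σ ^ 2 * γ)
    (hhigh : σ ^ 2 * γ ≤ Pt * normSqV h)
    (w : Fin M → ℂ)
    (hw : w = ((Real.sqrt (σ ^ 2 * γ / normSqV h) : ℝ) : ℂ) • ((β / (‖β‖ : ℂ)) • hbar)
            + ((Real.sqrt (Pt - σ ^ 2 * γ / normSqV h) : ℝ) : ℂ) • bperpbar) :
    normSqV w = Pt ∧
    Complex.normSq (star h ⬝ᵥ w) = σ ^ 2 * γ ∧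
    Complex.normSq (star b ⬝ᵥ w) =
      (‖β‖ * Real.sqrt (σ ^ 2 * γ) / normV h
        + normV bperp * Real.sqrt (Pt - σ ^ 2 * γ / normSqV h)) ^ 2 ∧
    Feasible22 Pt σ γ h (vecMulVec w (star w)) 0 :=
  stmt_2_general h b Pt σ γ hγ hbar hhbar β hβ bperp hbperp bperpbar hbperpbar hβne hindep hhigh w
    hw
end

section
/- Assume σ²γ̄ ≤ P_t·‖h‖² (so that problem (33) is feasible). Then problem (33) admits a rank-one optimal solution: there exists w ∈ ℂ^M such that R̄ = w w^H is feasible for problem (33) and b^H R̄ b ≥ b^H R b for every feasible R of problem (33). -/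
open Matrix Finset ComplexOrder

/-- Feasibility for problem (33): `R` Hermitian PSD, `hᴴ R h ≥ σ²γ̄` and `tr R ≤ P_t`. -/
def Feasible33 {M : ℕ} (Pt σ γ : ℝ) (h : Fin M → ℂ)
    (R : Matrix (Fin M) (Fin M) ℂ) : Prop :=
  R.PosSemidef ∧ σ ^ 2 * γ ≤ quadForm R h ∧ (R.trace).re ≤ Pt

/-!
Write `h = ‖h‖ e₁` and `b = a e₁ + r e₂` with `‖e₁‖ = 1`, `a = ⟨e₁, b⟩`, `‖e₂‖ ≤ 1`, `e₁ ⟂ e₂`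
and `r ≥ 0`.
For a feasible `R = AᴴA` the point `z = (‖A e₁‖, ‖A e₂‖)` satisfies `σ²γ̄ ≤ ‖h‖² z₁²` and, by
Bessel's inequality applied to the rows of `A`, `z₁² + z₂² ≤ tr R ≤ P_t`; moreover
`bᴴ R b = ‖A b‖² ≤ (|a| z₁ + r z₂)²`. Conversely each such `z` is attained with equality by the
rank-one matrix `w wᴴ`, `w = z₁ φ e₁ + z₂ e₂`, where the phase `φ` makes `φ ⟨b, e₁⟩ = |a|`.
Hence a maximiser of `(|a| z₁ + r z₂)²` over this compact planar set yields the optimal `w`.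
-/

open scoped InnerProductSpace
open WithLp (toLp ofLp)

section InnerProductSpace

variable {𝕜 E : Type*} [RCLike 𝕜] [NormedAddCommGroup E] [InnerProductSpace 𝕜 E]

lemma inner_sub_inner_smul_eq_zero {e : E} (he : ‖e‖ = 1) (v : E) :
    ⟪e, v - ⟪e, v⟫_𝕜 • e⟫_𝕜 = 0 := by
  rw [inner_sub_right, inner_smul_right, inner_self_eq_norm_sq_to_K, he]
  simp

lemma norm_inner_sq_add_norm_inner_sq_le {e₁ e₂ : E} (he₁ : ‖e₁‖ = 1) (he₂ : ‖e₂‖ ≤ 1)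
    (h₁₂ : ⟪e₁, e₂⟫_𝕜 = 0) (v : E) :
    ‖⟪e₁, v⟫_𝕜‖ ^ 2 + ‖⟪e₂, v⟫_𝕜‖ ^ 2 ≤ ‖v‖ ^ 2 := by
  set v' := v - ⟪e₁, v⟫_𝕜 • e₁
  have hv : v = ⟪e₁, v⟫_𝕜 • e₁ + v' := (add_sub_cancel _ _).symm
  have hpyth : ‖v‖ ^ 2 = ‖⟪e₁, v⟫_𝕜‖ ^ 2 + ‖v'‖ ^ 2 := by
    conv_lhs => rw [hv]
    rw [@norm_add_sq 𝕜, inner_smul_left, inner_sub_inner_smul_eq_zero he₁, mul_zero,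
      map_zero, mul_zero, add_zero, norm_smul, he₁, mul_one]
  have h₂v : ⟪e₂, v⟫_𝕜 = ⟪e₂, v'⟫_𝕜 := by
    conv_lhs => rw [hv]
    rw [inner_add_right, inner_smul_right, inner_eq_zero_symm.mp h₁₂, mul_zero, zero_add]
  have h₂v' : ‖⟪e₂, v'⟫_𝕜‖ ≤ ‖v'‖ :=
    (norm_inner_le_norm _ _).trans (mul_le_of_le_one_left (norm_nonneg _) he₂)
  rw [hpyth, h₂v]
  gcongr

lemma exists_orthogonal_decomposition {e₁ : E} (he₁ : ‖e₁‖ = 1) (v : E) :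
    ∃ (r : ℝ) (e₂ : E), 0 ≤ r ∧ ‖e₂‖ ≤ 1 ∧ ⟪e₁, e₂⟫_𝕜 = 0 ∧ ⟪e₂, v⟫_𝕜 = r ∧
      v = ⟪e₁, v⟫_𝕜 • e₁ + (r : 𝕜) • e₂ := by
  set p := v - ⟪e₁, v⟫_𝕜 • e₁
  have hv : v = ⟪e₁, v⟫_𝕜 • e₁ + p := (add_sub_cancel _ _).symm
  have h₁p : ⟪e₁, p⟫_𝕜 = 0 := inner_sub_inner_smul_eq_zero he₁ v
  by_cases hp : p = 0
  · exact ⟨0, 0, le_rfl, by simp, by simp, by simp, by simpa [hp] using hv⟩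
  have hp' : (‖p‖ : 𝕜) ≠ 0 := by simpa using hp
  refine ⟨‖p‖, (‖p‖⁻¹ : 𝕜) • p, norm_nonneg _, (norm_smul_inv_norm hp).le,
    by rw [inner_smul_right, h₁p, mul_zero], ?_, ?_⟩
  · conv_lhs => rw [hv]
    rw [inner_smul_left, inner_add_right, inner_smul_right, inner_eq_zero_symm.mp h₁p,
      inner_self_eq_norm_sq_to_K]
    simp only [map_inv₀, RCLike.conj_ofReal]
    field_simp
    ring
  · rw [smul_smul, mul_inv_cancel₀ hp', one_smul]
    exact hv

end InnerProductSpace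

def reducedFeasibleSet (H s P : ℝ) : Set (ℝ × ℝ) :=
  {z | s ≤ H * z.1 ^ 2 ∧ z.1 ^ 2 + z.2 ^ 2 ≤ P}

lemma isCompact_reducedFeasibleSet (H s P : ℝ) : IsCompact (reducedFeasibleSet H s P) := by
  refine (isCompact_closedBall (0 : ℝ × ℝ) √P).of_isClosed_subset
    ((isClosed_le continuous_const (by fun_prop : Continuous fun z : ℝ × ℝ => H * z.1 ^ 2)).inter
      (isClosed_le (by fun_prop : Continuous fun z : ℝ × ℝ => z.1 ^ 2 + z.2 ^ 2) continuous_const))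
    fun z ⟨_, hz⟩ => ?_
  rw [mem_closedBall_zero_iff, norm_prod_le_iff, Real.norm_eq_abs, Real.norm_eq_abs]
  exact ⟨Real.abs_le_sqrt (by nlinarith), Real.abs_le_sqrt (by nlinarith)⟩

lemma reducedFeasibleSet_nonempty {H s P : ℝ} (hP : 0 ≤ P) (hs : s ≤ P * H) :
    (reducedFeasibleSet H s P).Nonempty :=
  ⟨(√P, 0), by simpa [reducedFeasibleSet, Real.sq_sqrt hP, mul_comm] using hs⟩

section Matrix

variable {m n : Type*} [Fintype m] [Fintype n]

lemma star_dotProduct_eq_inner (x y : n → ℂ) : star x ⬝ᵥ y = ⟪toLp 2 x, toLp 2 y⟫_ℂ :=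
  dotProduct_comm _ _

lemma norm_toLp_sq (x : n → ℂ) : ‖toLp 2 x‖ ^ 2 = (star x ⬝ᵥ x).re := by
  rw [star_dotProduct_eq_inner]
  exact (inner_self_eq_norm_sq (𝕜 := ℂ) _).symm

lemma re_trace_conjTranspose_mul_self (A : Matrix m n ℂ) :
    (Aᴴ * A).trace.re = ∑ i, ‖toLp 2 (star (A i))‖ ^ 2 := by
  simp only [norm_toLp_sq, trace, diag_apply, mul_apply, conjTranspose_apply, dotProduct,
    star_star, Pi.star_apply, Complex.re_sum, mul_comm (star _)]
  exact sum_comm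

lemma norm_toLpLin_sq [DecidableEq n] (A : Matrix m n ℂ) (v : EuclideanSpace ℂ n) :
    ‖toLpLin 2 2 A v‖ ^ 2 = ∑ i, ‖⟪toLp 2 (star (A i)), v⟫_ℂ‖ ^ 2 := by
  rw [EuclideanSpace.norm_sq_eq]
  congr! 3 with i
  rw [EuclideanSpace.inner_eq_star_dotProduct, dotProduct_comm]
  simp [toLpLin_apply, mulVec]

lemma norm_toLpLin_sq_add_norm_toLpLin_sq_le [DecidableEq n] (A : Matrix m n ℂ)
    {e₁ e₂ : EuclideanSpace ℂ n} (he₁ : ‖e₁‖ = 1) (he₂ : ‖e₂‖ ≤ 1) (h₁₂ : ⟪e₁, e₂⟫_ℂ = 0) :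
    ‖toLpLin 2 2 A e₁‖ ^ 2 + ‖toLpLin 2 2 A e₂‖ ^ 2 ≤ (Aᴴ * A).trace.re := by
  rw [norm_toLpLin_sq, norm_toLpLin_sq, re_trace_conjTranspose_mul_self, ← sum_add_distrib]
  refine sum_le_sum fun i _ => ?_
  rw [norm_inner_symm, norm_inner_symm _ e₂]
  exact norm_inner_sq_add_norm_inner_sq_le he₁ he₂ h₁₂ _

lemma re_trace_vecMulVec_self_star (w : n → ℂ) :
    (vecMulVec w (star w)).trace.re = ‖toLp 2 w‖ ^ 2 := by
  rw [trace_vecMulVec, norm_toLp_sq, dotProduct_comm]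

lemma Matrix.PosSemidef.exists_eq_conjTranspose_mul_self [DecidableEq n] {R : Matrix n n ℂ}
    (hR : R.PosSemidef) : ∃ A : Matrix n n ℂ, R = Aᴴ * A := by
  open MatrixOrder in
  obtain ⟨A, rfl⟩ := CStarAlgebra.nonneg_iff_eq_star_mul_self.mp hR.nonneg
  exact ⟨A, rfl⟩

end Matrix

section QuadForm

variable {M : ℕ}

lemma normSqV_eq_norm_sq (v : Fin M → ℂ) : normSqV v = ‖toLp 2 v‖ ^ 2 := by
  simp [normSqV, EuclideanSpace.norm_sq_eq, Complex.sq_norm]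

lemma quadForm_conjTranspose_mul_self (A : Matrix (Fin M) (Fin M) ℂ) (v : Fin M → ℂ) :
    quadForm (Aᴴ * A) v = ‖toLpLin 2 2 A (toLp 2 v)‖ ^ 2 := by
  rw [quadForm, ← mulVec_mulVec, dotProduct_mulVec, ← star_mulVec, toLpLin_apply, norm_toLp_sq]

lemma quadForm_vecMulVec_self_star (w v : Fin M → ℂ) :
    quadForm (vecMulVec w (star w)) v = ‖⟪toLp 2 v, toLp 2 w⟫_ℂ‖ ^ 2 := by
  rw [quadForm, vecMulVec_mulVec, dotProduct_smul, op_smul_eq_mul, star_dotProduct_eq_inner,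
    star_dotProduct_eq_inner]
  exact (inner_mul_symm_re_eq_norm (𝕜 := ℂ) _ _).trans (by rw [norm_mul, norm_inner_symm, sq])

end QuadForm

section Reduction

variable {M : ℕ} {h b : Fin M → ℂ} {e₁ e₂ : EuclideanSpace ℂ (Fin M)} {c r Pt σ γ : ℝ}

lemma exists_mem_reducedFeasibleSet_quadForm_le (he₁ : ‖e₁‖ = 1) (he₂ : ‖e₂‖ ≤ 1)
    (h₁₂ : ⟪e₁, e₂⟫_ℂ = 0) (hr : 0 ≤ r) (hh : toLp 2 h = (c : ℂ) • e₁)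
    (hb : toLp 2 b = ⟪e₁, toLp 2 b⟫_ℂ • e₁ + (r : ℂ) • e₂)
    {R : Matrix (Fin M) (Fin M) ℂ} (hR : Feasible33 Pt σ γ h R) :
    ∃ z ∈ reducedFeasibleSet (c ^ 2) (σ ^ 2 * γ) Pt,
      quadForm R b ≤ (‖⟪e₁, toLp 2 b⟫_ℂ‖ * z.1 + r * z.2) ^ 2 := by
  obtain ⟨hpsd, hsnr, htr⟩ := hR
  set a := ⟪e₁, toLp 2 b⟫_ℂ
  obtain ⟨A, rfl⟩ := hpsd.exists_eq_conjTranspose_mul_self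
  set T := toLpLin 2 2 A
  refine ⟨(‖T e₁‖, ‖T e₂‖), ⟨?_, ?_⟩, ?_⟩
  · rwa [quadForm_conjTranspose_mul_self, hh, map_smul, norm_smul, Complex.norm_real,
      Real.norm_eq_abs, mul_pow, sq_abs] at hsnr
  · exact (norm_toLpLin_sq_add_norm_toLpLin_sq_le A he₁ he₂ h₁₂).trans htr
  · rw [quadForm_conjTranspose_mul_self, hb, map_add, map_smul, map_smul]
    refine pow_le_pow_left₀ (norm_nonneg _) ((norm_add_le _ _).trans ?_) 2
    rw [norm_smul, norm_smul, Complex.norm_of_nonneg hr]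

lemma exists_feasible_rankOne_of_mem_reducedFeasibleSet (he₁ : ‖e₁‖ = 1) (he₂ : ‖e₂‖ ≤ 1)
    (h₁₂ : ⟪e₁, e₂⟫_ℂ = 0) (hbe₂ : ⟪e₂, toLp 2 b⟫_ℂ = r) (hh : toLp 2 h = (c : ℂ) • e₁)
    {z : ℝ × ℝ} (hz : z ∈ reducedFeasibleSet (c ^ 2) (σ ^ 2 * γ) Pt) :
    ∃ w : Fin M → ℂ, Feasible33 Pt σ γ h (vecMulVec w (star w)) ∧
      quadForm (vecMulVec w (star w)) b = (‖⟪e₁, toLp 2 b⟫_ℂ‖ * z.1 + r * z.2) ^ 2 := by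
  obtain ⟨φ, hφ, hφb⟩ := Complex.exists_norm_eq_mul_self ⟪toLp 2 b, e₁⟫_ℂ
  set w := (z.1 * φ : ℂ) • e₁ + (z.2 : ℂ) • e₂
  refine ⟨ofLp w, ⟨posSemidef_vecMulVec_self_star _, ?_, ?_⟩, ?_⟩
  · have hw₁ : ⟪e₁, w⟫_ℂ = z.1 * φ := by simp [w, h₁₂, he₁]
    rw [quadForm_vecMulVec_self_star, WithLp.toLp_ofLp, hh, inner_smul_left, hw₁]
    simpa [hφ, mul_pow] using hz.1
  · have hw : ‖w‖ ^ 2 = z.1 ^ 2 + z.2 ^ 2 * ‖e₂‖ ^ 2 := by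
      rw [@norm_add_sq ℂ, inner_smul_left, inner_smul_right, h₁₂]
      simp [norm_smul, hφ, he₁, mul_pow]
    rw [re_trace_vecMulVec_self_star, WithLp.toLp_ofLp, hw]
    nlinarith [hz.2, pow_le_one₀ (norm_nonneg e₂) he₂ (n := 2), sq_nonneg z.2]
  · have hbw : ⟪toLp 2 b, w⟫_ℂ = ((‖⟪e₁, toLp 2 b⟫_ℂ‖ * z.1 + r * z.2 : ℝ) : ℂ) := by
      rw [inner_add_right, inner_smul_right, inner_smul_right, ← inner_conj_symm _ e₂, hbe₂,
        Complex.conj_ofReal, norm_inner_symm]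
      push_cast
      rw [hφb]
      ring
    rw [quadForm_vecMulVec_self_star, WithLp.toLp_ofLp, hbw, Complex.norm_real, Real.norm_eq_abs,
      sq_abs]

end Reduction

theorem stmt_5_general {M : ℕ} (h b : Fin M → ℂ) (hh : h ≠ 0)
    (Pt σ γ : ℝ) (hPt : 0 < Pt)
    (hfeas : σ ^ 2 * γ ≤ Pt * normSqV h) :
    ∃ w : Fin M → ℂ, Feasible33 Pt σ γ h (vecMulVec w (star w)) ∧
      ∀ R : Matrix (Fin M) (Fin M) ℂ, Feasible33 Pt σ γ h R →
        quadForm R b ≤ quadForm (vecMulVec w (star w)) b := by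
  set c := ‖toLp 2 h‖
  set e₁ := ((c : ℂ)⁻¹) • toLp 2 h
  have he₁ : ‖e₁‖ = 1 := norm_smul_inv_norm (by simpa using hh)
  have hh₁ : toLp 2 h = (c : ℂ) • e₁ := by
    rw [smul_smul, mul_inv_cancel₀ (by simpa [c] using hh), one_smul]
  obtain ⟨r, e₂, hr, he₂, h₁₂, hbe₂, hb⟩ :=
    exists_orthogonal_decomposition (𝕜 := ℂ) he₁ (toLp 2 b)
  obtain ⟨z, hz, hmax⟩ := (isCompact_reducedFeasibleSet (c ^ 2) (σ ^ 2 * γ) Pt).exists_isMaxOn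
    (reducedFeasibleSet_nonempty hPt.le (normSqV_eq_norm_sq h ▸ hfeas))
    (by fun_prop : Continuous fun z : ℝ × ℝ => (‖⟪e₁, toLp 2 b⟫_ℂ‖ * z.1 + r * z.2) ^ 2).continuousOn
  obtain ⟨w, hw, hwb⟩ := exists_feasible_rankOne_of_mem_reducedFeasibleSet he₁ he₂ h₁₂ hbe₂ hh₁ hz
  refine ⟨w, hw, fun R hR => ?_⟩
  obtain ⟨z', hz', hRb⟩ := exists_mem_reducedFeasibleSet_quadForm_le he₁ he₂ h₁₂ hr hh₁ hb hR
  exact hwb ▸ hRb.trans (hmax hz')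

/-- If `σ²γ̄ ≤ P_t ‖h‖²`, then problem (33) admits a rank-one optimal solution
`R̄ = w wᴴ`. -/
theorem stmt_5 {M : ℕ} (hM : 1 ≤ M) (h b : Fin M → ℂ) (hh : h ≠ 0) (hb : b ≠ 0)
    (Pt σ γ : ℝ) (hPt : 0 < Pt) (hσ : 0 < σ) (hγ : 0 ≤ γ)
    (hfeas : σ ^ 2 * γ ≤ Pt * normSqV h) :
    ∃ w : Fin M → ℂ, Feasible33 Pt σ γ h (vecMulVec w (star w)) ∧
      ∀ R : Matrix (Fin M) (Fin M) ℂ, Feasible33 Pt σ γ h R →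
        quadForm R b ≤ quadForm (vecMulVec w (star w)) b :=
  stmt_5_general h b hh Pt σ γ hPt hfeas
end
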